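/- arXiv:1507.08654 — 2 statements merged into one kernel-verified Lean document; each statement's English description precedes it below -/
import Mathlib

section
/- Let n = 2p be even and let e_1, …, e_r (1 ≤ r ≤ p − 1) be pairwise non-adjacent edges of K_n (no two sharing an endpoint). Then a(K_n \ {e_1, …, e_r}; x) = a(K_n; x); more precisely, a nonempty set S of vertices is a strong defensive alliance in K_n \ {e_1, …, e_r} (with connected induced subgraph) if and only if |S| ≥ p + 1, so a_k(K_n \ {e_1, …, e_r}) = a_k(K_n) for every k. -/
open SimpleGraph Polynomial Finset

/-- `δ_S(v)`: the number of neighbors of `v` lying in the set `S`. -/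
noncomputable def degIn {V : Type*} (G : SimpleGraph V) (S : Finset V) (v : V) : ℕ :=
  ((S : Set V) ∩ G.neighborSet v).ncard

/-- `δ(v)`: the degree of `v` in `G`. -/
noncomputable def degOf {V : Type*} (G : SimpleGraph V) (v : V) : ℕ :=
  (G.neighborSet v).ncard

/-- `S` is a strong defensive alliance in `G`: `S` is nonempty and every `v ∈ S`
satisfies `2·δ_S(v) ≥ δ(v)`. -/
def IsStrongAlliance {V : Type*} (G : SimpleGraph V) (S : Finset V) : Prop :=
  S.Nonempty ∧ ∀ v ∈ S, degOf G v ≤ 2 * degIn G S v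

/-- The alliances counted by the strong alliance polynomial: strong defensive alliances
whose induced subgraph is connected. -/
def IsCountedAlliance {V : Type*} (G : SimpleGraph V) (S : Finset V) : Prop :=
  IsStrongAlliance G S ∧ (G.induce (S : Set V)).Connected

/-- `a_k(G)`: the number of strong defensive alliances of cardinality `k` in `G`
whose induced subgraph is connected. -/
noncomputable def aCoeff {V : Type*} (G : SimpleGraph V) (k : ℕ) : ℕ :=
  {S : Finset V | S.card = k ∧ IsCountedAlliance G S}.ncard

/-- The strong alliance polynomial `a(G;x) = Σ_k a_k(G) x^k`. -/
noncomputable def alliancePoly {V : Type*} [Fintype V] (G : SimpleGraph V) : Polynomial ℤ :=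
  ∑ k ∈ Finset.range (Fintype.card V + 1), Polynomial.C (aCoeff G k : ℤ) * Polynomial.X ^ k

/-! In `K_{2p}` minus a matching `M`, a vertex `v` of `S` loses at most one neighbour overall and
at most as many inside `S` as overall, so the alliance inequality at `v` can only fail when
`|S| ≤ p`. If `|S| ≤ p` is an alliance, the inequality forces `|S| = p` and forces every
`v ∈ S` to be matched to a vertex outside `S`; this injects `S` into `M`, contradicting
`|M| ≤ p - 1`. Conversely for `|S| ≥ p + 1 ≥ 3` any two vertices of `S` are adjacent or, if they
form an edge of `M`, have a common neighbour in `S`. -/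

section MatchingComplement

variable {V : Type*} {M : Finset (Sym2 V)} {S : Finset V} {v : V}

lemma degOf_eq_degIn_univ [Fintype V] (G : SimpleGraph V) (v : V) :
    degOf G v = degIn G univ v := by
  simp [degOf, degIn]

lemma eq_of_mk_mem_of_mk_mem (hmatch : ∀ e ∈ M, ∀ f ∈ M, e ≠ f → ∀ v : V, v ∈ e → v ∉ f)
    {w x : V} (hw : s(v, w) ∈ M) (hx : s(v, x) ∈ M) : w = x := by
  by_contra hwx
  exact hmatch _ hw _ hx (fun h => hwx (Sym2.congr_right.mp h)) v
    (Sym2.mem_mk_left v w) (Sym2.mem_mk_left v x)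

lemma card_filter_mk_mem_le_one [DecidableEq V]
    (hmatch : ∀ e ∈ M, ∀ f ∈ M, e ≠ f → ∀ v : V, v ∈ e → v ∉ f)
    (S : Finset V) (v : V) : #{w ∈ S | s(v, w) ∈ M} ≤ 1 :=
  card_le_one.mpr fun _ hw _ hx =>
    eq_of_mk_mem_of_mk_mem hmatch (mem_filter.mp hw).2 (mem_filter.mp hx).2

lemma degIn_deleteEdges_top_add [DecidableEq V]
    (hM : (M : Set (Sym2 V)) ⊆ (⊤ : SimpleGraph V).edgeSet) (hv : v ∈ S) :
    degIn ((⊤ : SimpleGraph V).deleteEdges M) S v + #{w ∈ S | s(v, w) ∈ M} + 1 = #S := by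
  have hneighbors : (S : Set V) ∩ ((⊤ : SimpleGraph V).deleteEdges M).neighborSet v =
      ↑{w ∈ S.erase v | s(v, w) ∉ M} := by
    ext w
    simp only [Set.mem_inter_iff, mem_coe, mem_neighborSet, deleteEdges_adj, top_adj, mem_filter,
      mem_erase]
    grind
  have hpartners : {w ∈ S | s(v, w) ∈ M} = {w ∈ S.erase v | ¬s(v, w) ∉ M} := by
    ext w
    simp only [mem_filter, mem_erase, not_not, and_congr_left_iff]
    intro hw
    have : v ≠ w := by simpa using hM hw
    tauto
  rw [degIn, hneighbors, Set.ncard_coe_finset, hpartners, card_filter_add_card_filter_not,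
    card_erase_add_one hv]

lemma degOf_deleteEdges_top_add [Fintype V] [DecidableEq V]
    (hM : (M : Set (Sym2 V)) ⊆ (⊤ : SimpleGraph V).edgeSet) (v : V) :
    degOf ((⊤ : SimpleGraph V).deleteEdges M) v + #{w | s(v, w) ∈ M} + 1 = Fintype.card V := by
  rw [degOf_eq_degIn_univ, degIn_deleteEdges_top_add hM (mem_univ v), card_univ]

lemma card_le_card_of_forall_exists_mk_mem
    (hmatch : ∀ e ∈ M, ∀ f ∈ M, e ≠ f → ∀ v : V, v ∈ e → v ∉ f)
    (hS : ∀ v ∈ S, ∃ w ∉ S, s(v, w) ∈ M) : #S ≤ #M := by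
  refine card_le_card_of_forall_subsingleton (· ∈ ·) (fun v hv => ?_) (fun e he => ?_)
  · obtain ⟨w, -, hvw⟩ := hS v hv
    exact ⟨_, hvw, Sym2.mem_mk_left v w⟩
  · rintro u ⟨hu, hue⟩ w ⟨hw, hwe⟩
    by_contra huw
    obtain ⟨x, hx, hux⟩ := hS u hu
    have hxw : x = w := eq_of_mk_mem_of_mk_mem hmatch hux <|
      (Sym2.mem_and_mem_iff huw).mp ⟨hue, hwe⟩ ▸ he
    exact hx (hxw ▸ hw)

lemma degOf_le_two_mul_degIn_iff [Fintype V] [DecidableEq V]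
    (hM : (M : Set (Sym2 V)) ⊆ (⊤ : SimpleGraph V).edgeSet) (hv : v ∈ S) :
    degOf ((⊤ : SimpleGraph V).deleteEdges M) v ≤
        2 * degIn ((⊤ : SimpleGraph V).deleteEdges M) S v ↔
      Fintype.card V + 1 + 2 * #{w ∈ S | s(v, w) ∈ M} ≤ 2 * #S + #{w | s(v, w) ∈ M} := by
  have := degOf_deleteEdges_top_add hM v
  have := degIn_deleteEdges_top_add hM hv
  omega

lemma connected_induce_deleteEdges_top [DecidableEq V]
    (hmatch : ∀ e ∈ M, ∀ f ∈ M, e ≠ f → ∀ v : V, v ∈ e → v ∉ f) (hS : 3 ≤ #S) :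
    (((⊤ : SimpleGraph V).deleteEdges M).induce (S : Set V)).Connected := by
  have hadj : ∀ u w : (S : Set V), u.1 ≠ w.1 → s(u.1, w.1) ∉ M →
      (((⊤ : SimpleGraph V).deleteEdges M).induce (S : Set V)).Adj u w :=
    fun _ _ huw hM => deleteEdges_adj.mpr ⟨huw, hM⟩
  obtain ⟨v, hv⟩ : S.Nonempty := card_pos.mp (by omega)
  refine (connected_iff _).mpr ⟨fun ⟨u, hu⟩ ⟨w, hw⟩ => ?_, ⟨⟨v, hv⟩⟩⟩
  by_cases huw : u = w
  · subst huw; rfl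
  by_cases huwM : s(u, w) ∉ M
  · exact (hadj ⟨u, hu⟩ ⟨w, hw⟩ huw huwM).reachable
  -- `u` and `w` are matched to each other, so a third vertex of `S` is adjacent to both.
  rw [not_not] at huwM
  obtain ⟨z, hz⟩ : ((S.erase u).erase w).Nonempty := by
    have := pred_card_le_card_erase (s := S) (a := u)
    have := pred_card_le_card_erase (s := S.erase u) (a := w)
    exact card_pos.mp (by omega)
  obtain ⟨hzw, hzu, hzS⟩ : z ≠ w ∧ z ≠ u ∧ z ∈ S := by simpa using hz
  have huz : s(u, z) ∉ M := fun h => hzw (eq_of_mk_mem_of_mk_mem hmatch h huwM)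
  have hwz : s(w, z) ∉ M := fun h =>
    hzu (eq_of_mk_mem_of_mk_mem hmatch h (Sym2.eq_swap ▸ huwM))
  exact (hadj ⟨u, hu⟩ ⟨z, hzS⟩ (Ne.symm hzu) huz).reachable.trans
    (hadj ⟨w, hw⟩ ⟨z, hzS⟩ (Ne.symm hzw) hwz).symm.reachable

theorem isCountedAlliance_deleteEdges_top_iff [Fintype V] [DecidableEq V] {p : ℕ}
    (hV : Fintype.card V = 2 * p) (hp : 2 ≤ p)
    (hM : (M : Set (Sym2 V)) ⊆ (⊤ : SimpleGraph V).edgeSet)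
    (hmatch : ∀ e ∈ M, ∀ f ∈ M, e ≠ f → ∀ v : V, v ∈ e → v ∉ f) (hMp : #M ≤ p - 1) :
    IsCountedAlliance ((⊤ : SimpleGraph V).deleteEdges M) S ↔ p + 1 ≤ #S := by
  have hmatched_le_one := card_filter_mk_mem_le_one hmatch
  constructor
  · rintro ⟨⟨hne, hall⟩, -⟩
    by_contra! hSp
    have hmatched_out : ∀ v ∈ S, ∃ w ∉ S, s(v, w) ∈ M := by
      intro v hv
      have hineq := (degOf_le_two_mul_degIn_iff hM hv).mp (hall v hv)
      have := hmatched_le_one univ v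
      obtain ⟨w, hw⟩ : ({w | s(v, w) ∈ M} : Finset V).Nonempty := card_pos.mp (by omega)
      have hw_out : {w ∈ S | s(v, w) ∈ M} = ∅ := card_eq_zero.mp (by omega)
      exact ⟨w, fun hwS => (filter_eq_empty_iff.mp hw_out hwS) (mem_filter.mp hw).2,
        (mem_filter.mp hw).2⟩
    have := card_le_card_of_forall_exists_mk_mem hmatch hmatched_out
    have := card_pos.mpr hne
    obtain ⟨v, hv⟩ := hne
    have hineq := (degOf_le_two_mul_degIn_iff hM hv).mp (hall v hv)
    have := hmatched_le_one univ v
    omega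
  · intro hSp
    refine ⟨⟨card_pos.mp (by omega), fun v hv => (degOf_le_two_mul_degIn_iff hM hv).mpr ?_⟩,
      connected_induce_deleteEdges_top hmatch (by omega)⟩
    have := hmatched_le_one univ v
    have : #{w ∈ S | s(v, w) ∈ M} ≤ #{w | s(v, w) ∈ M} :=
      card_le_card (filter_subset_filter _ (subset_univ S))
    omega

end MatchingComplement

lemma aCoeff_congr {V : Type*} {G H : SimpleGraph V}
    (h : ∀ S, IsCountedAlliance G S ↔ IsCountedAlliance H S) (k : ℕ) :
    aCoeff G k = aCoeff H k := by
  simp only [aCoeff, h]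

lemma alliancePoly_congr {V : Type*} [Fintype V] {G H : SimpleGraph V}
    (h : ∀ S, IsCountedAlliance G S ↔ IsCountedAlliance H S) :
    alliancePoly G = alliancePoly H := by
  simp only [alliancePoly, aCoeff_congr h]

/-- Let `n = 2p` be even and let `M = {e_1, …, e_r}` with `1 ≤ r ≤ p − 1` be
pairwise non-adjacent edges of `K_n` (no two sharing an endpoint).  Then a nonempty vertex
set `S` is a strong defensive alliance in `K_n \ M` (with connected induced subgraph) iff
`|S| ≥ p + 1`; so `a_k(K_n \ M) = a_k(K_n)` for every `k`, and
`a(K_n \ M; x) = a(K_n; x)`. -/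
theorem stmt_18 (p : ℕ) (M : Finset (Sym2 (Fin (2 * p))))
    (hM : ∀ e ∈ M, e ∈ (⊤ : SimpleGraph (Fin (2 * p))).edgeSet)
    (hmatch : ∀ e ∈ M, ∀ f ∈ M, e ≠ f → ∀ v : Fin (2 * p), v ∈ e → v ∉ f)
    (hr1 : 1 ≤ M.card) (hr2 : M.card ≤ p - 1) :
    (∀ S : Finset (Fin (2 * p)), S.Nonempty →
      (IsCountedAlliance ((⊤ : SimpleGraph (Fin (2 * p))).deleteEdges ↑M) S ↔
        p + 1 ≤ S.card)) ∧
    (∀ k : ℕ, aCoeff ((⊤ : SimpleGraph (Fin (2 * p))).deleteEdges ↑M) k =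
      aCoeff (⊤ : SimpleGraph (Fin (2 * p))) k) ∧
    alliancePoly ((⊤ : SimpleGraph (Fin (2 * p))).deleteEdges ↑M) =
      alliancePoly (⊤ : SimpleGraph (Fin (2 * p))) := by
  have hp : 2 ≤ p := by omega
  have hV : Fintype.card (Fin (2 * p)) = 2 * p := Fintype.card_fin _
  have hKM := fun S => isCountedAlliance_deleteEdges_top_iff (S := S) hV hp hM hmatch hr2
  have hK : ∀ S, IsCountedAlliance (⊤ : SimpleGraph (Fin (2 * p))) S ↔ p + 1 ≤ #S := by
    simpa using fun S => isCountedAlliance_deleteEdges_top_iff (M := ∅) (S := S) hV hp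
      (by simp) (by simp) (by simp)
  have hsame := fun S => (hKM S).trans (hK S).symm
  exact ⟨fun S _ => hKM S, aCoeff_congr hsame, alliancePoly_congr hsame⟩
end

section
/- Let n = 2p ≥ 2 be even and let M = {e_1, …, e_p} be a perfect matching of K_n (p pairwise non-adjacent edges covering all vertices). Then the strong defensive alliance number of K_n \ M equals p (there is a strong defensive alliance of cardinality p, namely a set containing exactly one endpoint of each matching edge, and none of cardinality less than p), whereas the strong defensive alliance number of K_n is p + 1; in particular a(K_n \ M; x) ≠ a(K_n; x). -/
/-!
A member `v` of an alliance `S` has at most `|S| - 1` neighbours in `S`, so `2 (|S| - 1) ≥ δ(v)`.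
In `K_{2p}` every degree is `2p - 1` and in `K_{2p} \ M` it is `2p - 2`, giving the lower bounds
`p + 1` and `p`. Conversely, a clique satisfying this degree bound is a connected alliance: any
`p + 1` vertices of `K_{2p}` qualify, and a transversal of `M` is a clique of size `p` in
`K_{2p} \ M`. The two polynomials then differ in the coefficient of `x^p`.
-/

open SimpleGraph Polynomial Finset

section Alliance

variable {V : Type*} {G : SimpleGraph V} {S : Finset V}

lemma degIn_le_card_sub_one {v : V} (hv : v ∈ S) : degIn G S v ≤ S.card - 1 := by
  classical
  calc degIn G S v ≤ ((S.erase v : Finset V) : Set V).ncard := by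
        refine Set.ncard_le_ncard ?_ (Set.toFinite _)
        rintro w ⟨hwS, hvw⟩
        exact Finset.mem_erase.mpr ⟨(G.ne_of_adj hvw).symm, hwS⟩
    _ = S.card - 1 := by rw [Set.ncard_coe_finset, Finset.card_erase_of_mem hv]

lemma SimpleGraph.IsClique.degIn_eq (hS : G.IsClique (S : Set V)) {v : V} (hv : v ∈ S) :
    degIn G S v = S.card - 1 := by
  classical
  have hinter : (S : Set V) ∩ G.neighborSet v = ((S.erase v : Finset V) : Set V) := by
    ext w
    simp only [Set.mem_inter_iff, Finset.mem_coe, mem_neighborSet, Finset.coe_erase,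
      Set.mem_sdiff, Set.mem_singleton_iff]
    exact ⟨fun ⟨hw, hvw⟩ => ⟨hw, (G.ne_of_adj hvw).symm⟩,
      fun ⟨hw, hwv⟩ => ⟨hw, hS hv hw (Ne.symm hwv)⟩⟩
  rw [degIn, hinter, Set.ncard_coe_finset, Finset.card_erase_of_mem hv]

lemma SimpleGraph.IsClique.connected_induce (hS : G.IsClique (S : Set V)) (hne : S.Nonempty) :
    (G.induce (S : Set V)).Connected := by
  have : Nonempty (S : Set V) := hne.coe_sort
  rw [induce_eq_top.mpr hS]
  exact connected_top

lemma SimpleGraph.IsClique.isCountedAlliance (hS : G.IsClique (S : Set V)) (hne : S.Nonempty)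
    (hdeg : ∀ v ∈ S, degOf G v ≤ 2 * (S.card - 1)) : IsCountedAlliance G S :=
  ⟨⟨hne, fun v hv => hS.degIn_eq hv ▸ hdeg v hv⟩, hS.connected_induce hne⟩

lemma IsStrongAlliance.add_two_le_two_mul_card {d : ℕ} (hS : IsStrongAlliance G S)
    (hd : ∀ v, d ≤ degOf G v) : d + 2 ≤ 2 * S.card := by
  obtain ⟨⟨v, hv⟩, hall⟩ := hS
  have hdeg := hall v hv
  have hdegIn := degIn_le_card_sub_one (G := G) hv
  have hpos := Finset.card_pos.mpr ⟨v, hv⟩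
  have hdv := hd v
  omega

lemma degOf_top [Fintype V] (v : V) : degOf (⊤ : SimpleGraph V) v = Fintype.card V - 1 := by
  rw [degOf, neighborSet_top, Set.ncard_compl, Set.ncard_singleton, Nat.card_eq_fintype_card]

lemma isCountedAlliance_top_iff [Fintype V] :
    IsCountedAlliance (⊤ : SimpleGraph V) S ↔ S.Nonempty ∧ Fintype.card V + 1 ≤ 2 * S.card := by
  refine ⟨fun hS => ⟨hS.1.1, ?_⟩, fun ⟨hne, hcard⟩ => ?_⟩
  · have hbound := hS.1.add_two_le_two_mul_card fun v => (degOf_top v).ge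
    have hV : 0 < Fintype.card V := Fintype.card_pos_iff.mpr ⟨hS.1.1.choose⟩
    omega
  · have hclique : (⊤ : SimpleGraph V).IsClique (S : Set V) := fun _ _ _ _ hab => hab
    exact hclique.isCountedAlliance hne fun v _ => by rw [degOf_top]; omega

lemma aCoeff_pos_iff [Finite V] {k : ℕ} :
    0 < aCoeff G k ↔ ∃ S : Finset V, S.card = k ∧ IsCountedAlliance G S := by
  rw [aCoeff, Set.ncard_pos (Set.toFinite _)]
  rfl

lemma coeff_alliancePoly [Fintype V] {k : ℕ} (hk : k ≤ Fintype.card V) :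
    (alliancePoly G).coeff k = aCoeff G k := by
  simp only [alliancePoly, finsetSum_coeff, coeff_C_mul, coeff_X_pow, mul_ite, mul_one,
    mul_zero, Finset.sum_ite_eq, Finset.mem_range]
  simp [Nat.lt_succ_of_le hk]

lemma alliancePoly_ne_of_card_lt [Fintype V] {H : SimpleGraph V} {k : ℕ}
    (hk : k ≤ Fintype.card V) (hG : ∃ S : Finset V, S.card = k ∧ IsCountedAlliance G S)
    (hH : ∀ S : Finset V, IsCountedAlliance H S → k < S.card) :
    alliancePoly G ≠ alliancePoly H := by
  intro hpoly
  have hcoeff : aCoeff G k = aCoeff H k := by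
    exact_mod_cast (coeff_alliancePoly hk).symm.trans
      ((congrArg (coeff · k) hpoly).trans (coeff_alliancePoly hk))
  obtain ⟨S, hScard, hS⟩ := aCoeff_pos_iff.mp (hcoeff ▸ aCoeff_pos_iff.mpr hG)
  exact (hH S hS).ne' hScard

end Alliance

section PerfectMatching

variable {V : Type*} {M : Finset (Sym2 V)}

lemma eq_of_mem_of_mem_of_matching
    (hmatch : ∀ e ∈ M, ∀ f ∈ M, e ≠ f → ∀ v : V, v ∈ e → v ∉ f)
    {e f : Sym2 V} (he : e ∈ M) (hf : f ∈ M) {v : V} (hve : v ∈ e) (hvf : v ∈ f) : e = f :=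
  by_contra fun hef => hmatch e he f hf hef v hve hvf

lemma neighborSet_top_deleteEdges_of_matching
    (hmatch : ∀ e ∈ M, ∀ f ∈ M, e ≠ f → ∀ v : V, v ∈ e → v ∉ f)
    {v w : V} (hvw : s(v, w) ∈ M) :
    ((⊤ : SimpleGraph V).deleteEdges ↑M).neighborSet v = {v, w}ᶜ := by
  ext u
  simp only [SimpleGraph.mem_neighborSet, SimpleGraph.deleteEdges_adj, SimpleGraph.top_adj,
    Finset.mem_coe, Set.mem_compl_iff, Set.mem_insert_iff, Set.mem_singleton_iff, not_or]
  refine ⟨fun ⟨hvu, hu⟩ => ⟨Ne.symm hvu, fun huw => hu (huw ▸ hvw)⟩,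
    fun ⟨huv, huw⟩ => ⟨Ne.symm huv, fun hu => huw ?_⟩⟩
  have := eq_of_mem_of_mem_of_matching hmatch hu hvw (Sym2.mem_mk_left v u) (Sym2.mem_mk_left v w)
  exact Sym2.congr_right.mp this

lemma degOf_top_deleteEdges_of_perfect_matching [Fintype V]
    (hM : ∀ e ∈ M, e ∈ (⊤ : SimpleGraph V).edgeSet)
    (hmatch : ∀ e ∈ M, ∀ f ∈ M, e ≠ f → ∀ v : V, v ∈ e → v ∉ f)
    (hcover : ∀ v : V, ∃ e ∈ M, v ∈ e) (v : V) :
    degOf ((⊤ : SimpleGraph V).deleteEdges ↑M) v = Fintype.card V - 2 := by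
  obtain ⟨e, he, hve⟩ := hcover v
  have hvw : s(v, Sym2.Mem.other hve) ∈ M := (Sym2.other_spec hve).symm ▸ he
  have hne : v ≠ Sym2.Mem.other hve := (SimpleGraph.top_adj _ _).mp (hM _ hvw)
  rw [degOf, neighborSet_top_deleteEdges_of_matching hmatch hvw, Set.ncard_compl,
    Set.ncard_pair hne, Nat.card_eq_fintype_card]

lemma card_eq_card_of_transversal
    (hmatch : ∀ e ∈ M, ∀ f ∈ M, e ≠ f → ∀ v : V, v ∈ e → v ∉ f)
    (hcover : ∀ v : V, ∃ e ∈ M, v ∈ e) {S : Finset V}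
    (hS : ∀ e ∈ M, ∃! v : V, v ∈ e ∧ v ∈ S) : S.card = M.card := by
  choose E hEM hvE using hcover
  refine Finset.card_bij (fun v _ => E v) (fun v _ => hEM v) ?_ ?_
  · intro a ha b hb hab
    exact (hS (E a) (hEM a)).unique ⟨hvE a, ha⟩ ⟨hab ▸ hvE b, hb⟩
  · intro e he
    obtain ⟨v, ⟨hve, hvS⟩, -⟩ := hS e he
    exact ⟨v, hvS, eq_of_mem_of_mem_of_matching hmatch (hEM v) he (hvE v) hve⟩

lemma isClique_top_deleteEdges_of_transversal {S : Finset V}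
    (hS : ∀ e ∈ M, ∃! v : V, v ∈ e ∧ v ∈ S) :
    ((⊤ : SimpleGraph V).deleteEdges ↑M).IsClique (S : Set V) := by
  intro a ha b hb hab
  refine SimpleGraph.deleteEdges_adj.mpr ⟨hab, fun habM => hab ?_⟩
  exact (hS _ habM).unique ⟨Sym2.mem_mk_left a b, ha⟩ ⟨Sym2.mem_mk_right a b, hb⟩

lemma exists_transversal (hmatch : ∀ e ∈ M, ∀ f ∈ M, e ≠ f → ∀ v : V, v ∈ e → v ∉ f) :
    ∃ S : Finset V, ∀ e ∈ M, ∃! v : V, v ∈ e ∧ v ∈ S := by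
  classical
  refine ⟨M.image fun e => e.out.1, fun e he => ⟨e.out.1, ⟨Sym2.out_fst_mem e,
    Finset.mem_image_of_mem _ he⟩, ?_⟩⟩
  rintro v ⟨hve, hvS⟩
  obtain ⟨f, hf, rfl⟩ := Finset.mem_image.mp hvS
  rw [eq_of_mem_of_mem_of_matching hmatch hf he (Sym2.out_fst_mem f) hve]

lemma isCountedAlliance_top_deleteEdges_of_transversal [Fintype V]
    (hM : ∀ e ∈ M, e ∈ (⊤ : SimpleGraph V).edgeSet)
    (hmatch : ∀ e ∈ M, ∀ f ∈ M, e ≠ f → ∀ v : V, v ∈ e → v ∉ f)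
    (hcover : ∀ v : V, ∃ e ∈ M, v ∈ e) (hV : Fintype.card V = 2 * M.card) (hpos : 0 < M.card)
    {S : Finset V} (hS : ∀ e ∈ M, ∃! v : V, v ∈ e ∧ v ∈ S) :
    IsCountedAlliance ((⊤ : SimpleGraph V).deleteEdges ↑M) S := by
  have hcard := card_eq_card_of_transversal hmatch hcover hS
  refine (isClique_top_deleteEdges_of_transversal hS).isCountedAlliance
    (Finset.card_pos.mp (by omega)) fun v _ => ?_
  rw [degOf_top_deleteEdges_of_perfect_matching hM hmatch hcover, hV, hcard]
  omega

end PerfectMatching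
/-- Let `n = 2p ≥ 2` be even and let `M = {e_1, …, e_p}` be a perfect matching
of `K_n` (`p` pairwise non-adjacent edges covering all vertices).  Then the strong defensive
alliance number of `K_n \ M` equals `p`: any set containing exactly one endpoint of each
matching edge is a strong defensive alliance (with connected induced subgraph) of
cardinality `p`, and there is none of cardinality less than `p`.  In contrast, the strong
defensive alliance number of `K_n` is `p + 1`; in particular
`a(K_n \ M; x) ≠ a(K_n; x)`. -/
theorem stmt_19 (p : ℕ) (hp : 1 ≤ p) (M : Finset (Sym2 (Fin (2 * p))))
    (hM : ∀ e ∈ M, e ∈ (⊤ : SimpleGraph (Fin (2 * p))).edgeSet)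
    (hmatch : ∀ e ∈ M, ∀ f ∈ M, e ≠ f → ∀ v : Fin (2 * p), v ∈ e → v ∉ f)
    (hcard : M.card = p)
    (hcover : ∀ v : Fin (2 * p), ∃ e ∈ M, v ∈ e) :
    (∀ S : Finset (Fin (2 * p)), (∀ e ∈ M, ∃! v : Fin (2 * p), v ∈ e ∧ v ∈ S) →
      S.card = p ∧ IsCountedAlliance ((⊤ : SimpleGraph (Fin (2 * p))).deleteEdges ↑M) S) ∧
    (∃ S : Finset (Fin (2 * p)), S.card = p ∧
      IsCountedAlliance ((⊤ : SimpleGraph (Fin (2 * p))).deleteEdges ↑M) S) ∧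
    (∀ S : Finset (Fin (2 * p)),
      IsCountedAlliance ((⊤ : SimpleGraph (Fin (2 * p))).deleteEdges ↑M) S → p ≤ S.card) ∧
    (∃ S : Finset (Fin (2 * p)), S.card = p + 1 ∧
      IsCountedAlliance (⊤ : SimpleGraph (Fin (2 * p))) S) ∧
    (∀ S : Finset (Fin (2 * p)),
      IsCountedAlliance (⊤ : SimpleGraph (Fin (2 * p))) S → p + 1 ≤ S.card) ∧
    alliancePoly ((⊤ : SimpleGraph (Fin (2 * p))).deleteEdges ↑M) ≠
      alliancePoly (⊤ : SimpleGraph (Fin (2 * p))) := by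
  have hV : Fintype.card (Fin (2 * p)) = 2 * M.card := by rw [Fintype.card_fin, hcard]
  have htransversal : ∀ S : Finset (Fin (2 * p)), (∀ e ∈ M, ∃! v, v ∈ e ∧ v ∈ S) →
      S.card = p ∧ IsCountedAlliance ((⊤ : SimpleGraph (Fin (2 * p))).deleteEdges ↑M) S :=
    fun S hS => ⟨(card_eq_card_of_transversal hmatch hcover hS).trans hcard,
      isCountedAlliance_top_deleteEdges_of_transversal hM hmatch hcover hV (by omega) hS⟩
  obtain ⟨T, hT⟩ := exists_transversal hmatch
  have hTop_lower : ∀ S, IsCountedAlliance (⊤ : SimpleGraph (Fin (2 * p))) S → p + 1 ≤ S.card :=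
    fun S hS => by
      have := (isCountedAlliance_top_iff.mp hS).2
      rw [Fintype.card_fin] at this
      omega
  refine ⟨htransversal, ⟨T, htransversal T hT⟩, fun S hS => ?_, ?_, hTop_lower,
    alliancePoly_ne_of_card_lt (by simp; omega) ⟨T, htransversal T hT⟩ hTop_lower⟩
  · have := hS.1.add_two_le_two_mul_card fun v =>
      (degOf_top_deleteEdges_of_perfect_matching hM hmatch hcover v).ge
    rw [Fintype.card_fin] at this
    omega
  · obtain ⟨S, -, hS⟩ := Finset.exists_subset_card_eq (s := (Finset.univ : Finset (Fin (2 * p))))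
      (n := p + 1) (by simp; omega)
    exact ⟨S, hS, isCountedAlliance_top_iff.mpr ⟨Finset.card_pos.mp (by omega), by simp; omega⟩⟩
end
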